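/- Let g ∈ L¹_loc(ℝ^d) be such that N_1(g) < ∞, and suppose g is a limit in the seminorm N_1 of a sequence of trigonometric polynomials. Then the mean value M(g) := lim_{R→∞} R^{-d} ∫_{C_R} g(x) dx exists, and |M(g)| ≤ N_1(g). -/

import Mathlib

open MeasureTheory Filter

/-- The cube `C_R = {x : max_i |x i| ≤ R/2}`. -/
def cube (d : ℕ) (R : ℝ) : Set (Fin d → ℝ) := {x | ∀ i, |x i| ≤ R / 2}

/-- The Besicovitch seminorm `N_1`. -/
noncomputable def N1 (d : ℕ) (g : (Fin d → ℝ) → ℂ) : ℝ :=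
  Filter.limsup (fun R : ℝ => (R ^ d)⁻¹ * ∫ x in cube d R, ‖g x‖) Filter.atTop

/-- A trigonometric polynomial: a finite sum `Σ_{λ∈Λ} a_λ e^{2πiλ·x}`. -/
def IsTrigPoly (d : ℕ) (P : (Fin d → ℝ) → ℂ) : Prop :=
  ∃ (Λ : Finset (Fin d → ℝ)) (a : (Fin d → ℝ) → ℂ),
    ∀ x, P x = ∑ lam ∈ Λ,
      a lam * Complex.exp (2 * Real.pi * Complex.I * ((∑ i, lam i * x i : ℝ) : ℂ))

open Topology

/-!
Averaging over cubes is linear and `‖avg_R g - avg_R P‖ ≤ avg_R ‖g - P‖`, and the right-hand side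
is eventually below `N_1(g - P) + ε` as long as it stays bounded, which it does for bounded `P`.
The cube integral of a plane wave factors into one-dimensional integrals, each equal to `R` or
bounded in `R`, so averages of trigonometric polynomials converge. The averages of `g` are thus
uniformly approximable by convergent functions of `R`, hence Cauchy; and `|M(g)| ≤ N_1(g)` is the
limit of `|avg_R g| ≤ avg_R |g|`.
-/

lemma cube_eq_pi (d : ℕ) (R : ℝ) :
    cube d R = Set.univ.pi fun _ : Fin d => Set.Icc (-(R / 2)) (R / 2) := by
  ext x
  simp only [cube, Set.mem_ofPred_eq, Set.mem_pi, Set.mem_univ, true_implies, Set.mem_Icc, abs_le]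

lemma isCompact_cube (d : ℕ) (R : ℝ) : IsCompact (cube d R) := by
  rw [cube_eq_pi]
  exact isCompact_univ_pi fun _ => isCompact_Icc

lemma measureReal_cube (d : ℕ) {R : ℝ} (hR : 0 ≤ R) : volume.real (cube d R) = R ^ d := by
  rw [cube_eq_pi, measureReal_def, volume_pi_pi]
  simp [Real.volume_Icc, hR]

lemma MeasureTheory.LocallyIntegrable.integrableOn_cube {d : ℕ} {E : Type*}
    [NormedAddCommGroup E] {f : (Fin d → ℝ) → E} (hf : LocallyIntegrable f volume) (R : ℝ) :
    IntegrableOn f (cube d R) volume :=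
  hf.integrableOn_isCompact (isCompact_cube d R)

noncomputable def cubeAverage (d : ℕ) {E : Type*} [NormedAddCommGroup E] [NormedSpace ℝ E]
    (f : (Fin d → ℝ) → E) (R : ℝ) : E :=
  (R ^ d)⁻¹ • ∫ x in cube d R, f x

lemma N1_eq_limsup_cubeAverage (d : ℕ) (g : (Fin d → ℝ) → ℂ) :
    N1 d g = limsup (cubeAverage d fun x => ‖g x‖) atTop :=
  rfl

section cubeAverage

variable {d : ℕ} {E : Type*} [NormedAddCommGroup E] [NormedSpace ℝ E] {R : ℝ}

lemma norm_cubeAverage_le (hR : 0 ≤ R) (f : (Fin d → ℝ) → E) :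
    ‖cubeAverage d f R‖ ≤ cubeAverage d (fun x => ‖f x‖) R := by
  rw [cubeAverage, cubeAverage, norm_smul, smul_eq_mul, Real.norm_of_nonneg (by positivity)]
  gcongr
  exact norm_integral_le_integral_norm _

lemma dist_cubeAverage_le (hR : 0 ≤ R) {f f' : (Fin d → ℝ) → E}
    (hf : IntegrableOn f (cube d R) volume) (hf' : IntegrableOn f' (cube d R) volume) :
    dist (cubeAverage d f R) (cubeAverage d f' R) ≤ cubeAverage d (fun x => ‖f x - f' x‖) R := by
  rw [dist_eq_norm, cubeAverage, cubeAverage, ← smul_sub, ← integral_sub hf hf']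
  exact norm_cubeAverage_le hR (f - f')

lemma cubeAverage_const [CompleteSpace E] (hR : 0 < R) (c : E) :
    cubeAverage d (fun _ => c) R = c := by
  rw [cubeAverage, setIntegral_const, measureReal_cube d hR.le, smul_smul,
    inv_mul_cancel₀ (by positivity), one_smul]

lemma cubeAverage_add {f f' : (Fin d → ℝ) → E}
    (hf : IntegrableOn f (cube d R) volume) (hf' : IntegrableOn f' (cube d R) volume) :
    cubeAverage d (fun x => f x + f' x) R = cubeAverage d f R + cubeAverage d f' R := by
  rw [cubeAverage, integral_add hf hf', smul_add]
  rfl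

lemma cubeAverage_finset_sum {ι : Type*} (s : Finset ι) {f : ι → (Fin d → ℝ) → E}
    (hf : ∀ i ∈ s, IntegrableOn (f i) (cube d R) volume) :
    cubeAverage d (fun x => ∑ i ∈ s, f i x) R = ∑ i ∈ s, cubeAverage d (f i) R := by
  rw [cubeAverage, integral_finsetSum s hf, Finset.smul_sum]
  rfl

lemma cubeAverage_const_mul (c : ℂ) (f : (Fin d → ℝ) → ℂ) :
    cubeAverage d (fun x => c * f x) R = c * cubeAverage d f R := by
  rw [cubeAverage, cubeAverage, integral_const_mul, mul_smul_comm]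

lemma cubeAverage_mono (hR : 0 ≤ R) {u v : (Fin d → ℝ) → ℝ}
    (hu : IntegrableOn u (cube d R) volume) (hv : IntegrableOn v (cube d R) volume)
    (huv : ∀ x, u x ≤ v x) : cubeAverage d u R ≤ cubeAverage d v R := by
  rw [cubeAverage, cubeAverage, smul_eq_mul, smul_eq_mul]
  exact mul_le_mul_of_nonneg_left (setIntegral_mono hu hv huv) (by positivity)

end cubeAverage

lemma cubeAverage_norm_sub_le {d : ℕ} {E : Type*} [NormedAddCommGroup E] {R : ℝ} (hR : 0 < R)
    {f f' : (Fin d → ℝ) → E} {C : ℝ}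
    (hf : IntegrableOn f (cube d R) volume) (hf' : IntegrableOn f' (cube d R) volume)
    (hC : ∀ x, ‖f' x‖ ≤ C) :
    cubeAverage d (fun x => ‖f x - f' x‖) R ≤ cubeAverage d (fun x => ‖f x‖) R + C := by
  have hconst : IntegrableOn (fun _ => C) (cube d R) volume :=
    integrableOn_const (isCompact_cube d R).measure_lt_top.ne
  calc cubeAverage d (fun x => ‖f x - f' x‖) R
      ≤ cubeAverage d (fun x => ‖f x‖ + C) R :=
        cubeAverage_mono hR.le (hf.sub hf').norm (hf.norm.add hconst)
          fun x => (norm_sub_le _ _).trans (by gcongr; exact hC x)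
    _ = cubeAverage d (fun x => ‖f x‖) R + C := by
        rw [cubeAverage_add hf.norm hconst, cubeAverage_const hR]

lemma norm_integral_exp_mul_le {k : ℂ} (hk : k ≠ 0) (hk_re : k.re = 0) (a b : ℝ) :
    ‖∫ t in a..b, Complex.exp (k * t)‖ ≤ 2 / ‖k‖ := by
  have norm_exp : ∀ t : ℝ, ‖Complex.exp (k * t)‖ = 1 := fun t => by
    simp [Complex.norm_exp, hk_re]
  rw [integral_exp_mul_complex hk, norm_div]
  gcongr
  calc _ ≤ ‖Complex.exp (k * b)‖ + ‖Complex.exp (k * a)‖ := norm_sub_le _ _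
    _ = 2 := by rw [norm_exp, norm_exp]; norm_num

lemma exists_tendsto_average_Icc_exp (c : ℝ) : ∃ l : ℂ, Tendsto (fun R : ℝ =>
    (R : ℂ)⁻¹ * ∫ t in Set.Icc (-(R / 2)) (R / 2), Complex.exp (2 * Real.pi * Complex.I * c * t))
    atTop (𝓝 l) := by
  rcases eq_or_ne c 0 with rfl | hc
  · refine ⟨1, tendsto_const_nhds.congr' ?_⟩
    filter_upwards [eventually_gt_atTop 0] with R hR
    have : R / 2 - -(R / 2) = R := by ring
    simp [Real.volume_Icc, measureReal_def, this, hR.le, hR.ne']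
  set k : ℂ := 2 * Real.pi * Complex.I * c
  have hk : k ≠ 0 := by simp [k, hc, Real.pi_ne_zero]
  have hk_re : k.re = 0 := by simp [k]
  refine ⟨0, squeeze_zero_norm' ?_ (by simpa using tendsto_inv_atTop_zero.mul_const (2 / ‖k‖))⟩
  filter_upwards [eventually_gt_atTop 0] with R hR
  rw [integral_Icc_eq_integral_Ioc, ← intervalIntegral.integral_of_le (by linarith), norm_mul,
    norm_inv, Complex.norm_real, Real.norm_of_nonneg hR.le]
  exact mul_le_mul_of_nonneg_left (norm_integral_exp_mul_le hk hk_re _ _) (by positivity)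

lemma setIntegral_univ_pi_prod {ι 𝕜 : Type*} [Fintype ι] [RCLike 𝕜] {X : ι → Type*}
    [∀ i, MeasurableSpace (X i)] {μ : ∀ i, Measure (X i)} [∀ i, SigmaFinite (μ i)]
    (s : ∀ i, Set (X i)) (f : ∀ i, X i → 𝕜) :
    ∫ x in Set.univ.pi s, ∏ i, f i (x i) ∂Measure.pi μ = ∏ i, ∫ t in s i, f i t ∂μ i := by
  rw [Measure.restrict_pi_pi, integral_fintype_prod_eq_prod]

noncomputable def planeWave {d : ℕ} (lam x : Fin d → ℝ) : ℂ :=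
  Complex.exp (2 * Real.pi * Complex.I * ((∑ i, lam i * x i : ℝ) : ℂ))

lemma norm_planeWave {d : ℕ} (lam x : Fin d → ℝ) : ‖planeWave lam x‖ = 1 := by
  simp [planeWave, Complex.norm_exp]

@[fun_prop]
lemma continuous_planeWave {d : ℕ} (lam : Fin d → ℝ) : Continuous (planeWave lam) := by
  unfold planeWave
  fun_prop

lemma planeWave_eq_prod {d : ℕ} (lam x : Fin d → ℝ) :
    planeWave lam x = ∏ i, Complex.exp (2 * Real.pi * Complex.I * lam i * x i) := by
  rw [planeWave, ← Complex.exp_sum]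
  push_cast
  rw [Finset.mul_sum]
  simp only [mul_assoc]

lemma exists_tendsto_cubeAverage_planeWave (d : ℕ) (lam : Fin d → ℝ) :
    ∃ l : ℂ, Tendsto (cubeAverage d (planeWave lam)) atTop (𝓝 l) := by
  choose l hl using fun i => exists_tendsto_average_Icc_exp (lam i)
  refine ⟨∏ i, l i, (tendsto_finsetProd _ fun i _ => hl i).congr fun R => ?_⟩
  simp_rw [cubeAverage, planeWave_eq_prod, cube_eq_pi, volume_pi]
  rw [setIntegral_univ_pi_prod _ fun i (t : ℝ) => Complex.exp (2 * Real.pi * Complex.I * lam i * t),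
    Finset.prod_mul_distrib, Finset.prod_const, Finset.card_univ, Fintype.card_fin,
    Complex.real_smul]
  push_cast
  rw [inv_pow]

namespace IsTrigPoly

variable {d : ℕ} {P : (Fin d → ℝ) → ℂ}

lemma eq_sum_planeWave (hP : IsTrigPoly d P) :
    ∃ (Λ : Finset (Fin d → ℝ)) (a : (Fin d → ℝ) → ℂ),
      P = fun x => ∑ lam ∈ Λ, a lam * planeWave lam x :=
  let ⟨Λ, a, ha⟩ := hP
  ⟨Λ, a, funext ha⟩

lemma continuous (hP : IsTrigPoly d P) : Continuous P := by
  obtain ⟨Λ, a, rfl⟩ := hP.eq_sum_planeWave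
  fun_prop

lemma exists_norm_le (hP : IsTrigPoly d P) : ∃ C, ∀ x, ‖P x‖ ≤ C := by
  obtain ⟨Λ, a, rfl⟩ := hP.eq_sum_planeWave
  refine ⟨∑ lam ∈ Λ, ‖a lam‖, fun x => (norm_sum_le _ _).trans_eq ?_⟩
  simp only [norm_mul, norm_planeWave, mul_one]

lemma exists_tendsto_cubeAverage (hP : IsTrigPoly d P) :
    ∃ c, Tendsto (cubeAverage d P) atTop (𝓝 c) := by
  obtain ⟨Λ, a, rfl⟩ := hP.eq_sum_planeWave
  choose l hl using exists_tendsto_cubeAverage_planeWave d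
  refine ⟨∑ lam ∈ Λ, a lam * l lam,
    (tendsto_finsetSum _ fun lam _ => (hl lam).const_mul (a lam)).congr fun R => ?_⟩
  rw [cubeAverage_finset_sum _ fun lam _ =>
    ((continuous_planeWave lam).const_mul (a lam)).locallyIntegrable.integrableOn_cube R]
  simp_rw [cubeAverage_const_mul]

end IsTrigPoly

lemma exists_tendsto_of_forall_eventually_dist_lt {α E : Type*} [Nonempty α] [SemilatticeSup α]
    [PseudoMetricSpace E] [CompleteSpace E] {F : α → E}
    (h : ∀ ε > 0, ∃ A : α → E, (∃ c, Tendsto A atTop (𝓝 c)) ∧ ∀ᶠ R in atTop, dist (F R) (A R) < ε) :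
    ∃ c, Tendsto F atTop (𝓝 c) := by
  refine cauchySeq_tendsto_of_complete (Metric.cauchySeq_iff'.2 fun ε hε => ?_)
  obtain ⟨A, ⟨c, hc⟩, hFA⟩ := h (ε / 4) (by positivity)
  obtain ⟨N, hN⟩ :=
    eventually_atTop.1 (hFA.and (Metric.tendsto_nhds.1 hc (ε / 4) (by positivity)))
  refine ⟨N, fun R hR => ?_⟩
  obtain ⟨hFA_R, hAc_R⟩ := hN R hR
  obtain ⟨hFA_N, hAc_N⟩ := hN N le_rfl
  have h_four := dist_triangle4 (F R) (A R) (A N) (F N)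
  have h_mid := dist_triangle (A R) c (A N)
  rw [dist_comm (A N)] at h_four
  rw [dist_comm c] at h_mid
  linarith

lemma eventually_dist_cubeAverage_lt_of_N1_sub_lt {d : ℕ} {g P : (Fin d → ℝ) → ℂ} {C ε : ℝ}
    (hg : LocallyIntegrable g volume)
    (hg_bdd : IsBoundedUnder (· ≤ ·) atTop (cubeAverage d fun x => ‖g x‖))
    (hP : LocallyIntegrable P volume) (hC : ∀ x, ‖P x‖ ≤ C)
    (hε : N1 d (fun x => g x - P x) < ε) :
    ∀ᶠ R in atTop, dist (cubeAverage d g R) (cubeAverage d P R) < ε := by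
  obtain ⟨B, hB⟩ := hg_bdd
  replace hB : ∀ᶠ R in atTop, cubeAverage d (fun x => ‖g x‖) R ≤ B := hB
  have h_bdd : IsBoundedUnder (· ≤ ·) atTop (cubeAverage d fun x => ‖g x - P x‖) := by
    refine ⟨B + C, eventually_map.2 ?_⟩
    filter_upwards [hB, eventually_gt_atTop 0] with R hBR hR
    exact (cubeAverage_norm_sub_le hR (hg.integrableOn_cube R) (hP.integrableOn_cube R) hC).trans
      (by linarith)
  filter_upwards [eventually_lt_of_limsup_lt hε h_bdd, eventually_gt_atTop 0] with R hR_lt hR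
  exact (dist_cubeAverage_le hR.le (hg.integrableOn_cube R) (hP.integrableOn_cube R)).trans_lt
    hR_lt

/-- If `g` is locally integrable, `N_1(g)` is finite (the averages are eventually bounded), and
`g` is an `N_1`-limit of trigonometric polynomials, then the mean value
`M(g) = lim_{R→∞} R^{-d} ∫_{C_R} g` exists and `|M(g)| ≤ N_1(g)`. -/
theorem mean_value_exists (d : ℕ) (g : (Fin d → ℝ) → ℂ)
    (hloc : LocallyIntegrable g volume)
    (hfin : ∃ B : ℝ, ∀ᶠ R in Filter.atTop, (R ^ d : ℝ)⁻¹ * (∫ x in cube d R, ‖g x‖) ≤ B)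
    (happrox : ∃ P : ℕ → (Fin d → ℝ) → ℂ, (∀ n, IsTrigPoly d (P n)) ∧
      Filter.Tendsto (fun n => N1 d (fun x => g x - P n x)) Filter.atTop (nhds 0)) :
    ∃ Mg : ℂ,
      Filter.Tendsto (fun R : ℝ => (R ^ d : ℝ)⁻¹ • ∫ x in cube d R, g x)
        Filter.atTop (nhds Mg) ∧ ‖Mg‖ ≤ N1 d g := by
  obtain ⟨P, hP, hP_lim⟩ := happrox
  have hg_bdd : IsBoundedUnder (· ≤ ·) atTop (cubeAverage d fun x => ‖g x‖) := hfin
  obtain ⟨Mg, hMg⟩ : ∃ Mg, Tendsto (cubeAverage d g) atTop (𝓝 Mg) := by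
    refine exists_tendsto_of_forall_eventually_dist_lt fun ε hε => ?_
    obtain ⟨n, hn⟩ := (hP_lim.eventually (gt_mem_nhds hε)).exists
    obtain ⟨C, hC⟩ := (hP n).exists_norm_le
    exact ⟨cubeAverage d (P n), (hP n).exists_tendsto_cubeAverage,
      eventually_dist_cubeAverage_lt_of_N1_sub_lt hloc hg_bdd (hP n).continuous.locallyIntegrable
        hC hn⟩
  refine ⟨Mg, hMg, ?_⟩
  rw [← hMg.norm.limsup_eq, N1_eq_limsup_cubeAverage]
  exact limsup_le_limsup ((eventually_gt_atTop 0).mono fun R hR => norm_cubeAverage_le hR.le g)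
    hMg.norm.isBoundedUnder_ge.isCoboundedUnder_le hg_bdd
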